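/- arXiv:2602.13413 — 5 statements merged into one kernel-verified Lean document; each statement's English description precedes it below -/
import Mathlib

section
/- For all real numbers a, b and p ∈ (1,2], |a + b|^p ≤ |a|^p + p·sgn(a)·|a|^{p-1}·b + 2^{2-p}·|b|^p. -/
/-!
Scaling by `|a|^p` with `x = b / a` reduces the inequality to
`|1 + x|^p ≤ 1 + p x + 2^(2-p) |x|^p`. The difference `F` of the two sides is differentiable,
vanishes at `0`, and `F' / p = sgn(1+x)|1+x|^(p-1) - 1 - 2^(2-p) sgn(x)|x|^(p-1)`.
With `q = p - 1 ∈ (0, 1]`, subadditivity of `t ↦ t^q` gives `F' ≤ 0` for `x > 0` and `F' ≥ 0`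
for `-1 < x < 0`, while midpoint concavity, `1 + t^q ≤ 2^(1-q) (1 + t)^q`, gives `F' ≥ 0`
for `x ≤ -1`. Hence `F` is maximal at `0`.
-/

open Real Set

theorem rpow_add_rpow_le_two_rpow_mul_rpow_add {a b q : ℝ} (ha : 0 ≤ a) (hb : 0 ≤ b)
    (hq0 : 0 ≤ q) (hq1 : q ≤ 1) : a ^ q + b ^ q ≤ 2 ^ (1 - q) * (a + b) ^ q := by
  have hmid := (concaveOn_rpow hq0 hq1).2 (mem_Ici.2 ha) (mem_Ici.2 hb)
    (by norm_num : (0 : ℝ) ≤ 1 / 2) (by norm_num : (0 : ℝ) ≤ 1 / 2) (by norm_num)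
  simp only [smul_eq_mul, one_div_mul_eq_div, ← add_div] at hmid
  rw [div_rpow (add_nonneg ha hb) zero_le_two] at hmid
  rw [rpow_sub zero_lt_two, rpow_one]
  calc a ^ q + b ^ q = 2 * ((a ^ q + b ^ q) / 2) := by ring
    _ ≤ 2 * ((a + b) ^ q / 2 ^ q) := by gcongr
    _ = 2 / 2 ^ q * (a + b) ^ q := by ring

theorem abs_rpow_sub_two_mul_self (p x : ℝ) :
    |x| ^ (p - 2) * x = sign x * |x| ^ (p - 1) := by
  rcases lt_trichotomy x 0 with hx | rfl | hx
  · rw [sign_of_neg hx, show p - 1 = p - 2 + 1 by ring, rpow_add_one (abs_ne_zero.2 hx.ne),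
      abs_of_neg hx]
    ring
  · simp
  · rw [sign_of_pos hx, show p - 1 = p - 2 + 1 by ring, rpow_add_one (abs_ne_zero.2 hx.ne'),
      abs_of_pos hx]
    ring

theorem hasDerivAt_abs_rpow_eq_sign (x : ℝ) {p : ℝ} (hp : 1 < p) :
    HasDerivAt (fun x : ℝ ↦ |x| ^ p) (p * (sign x * |x| ^ (p - 1))) x := by
  simpa only [mul_assoc, abs_rpow_sub_two_mul_self] using hasDerivAt_abs_rpow x hp

theorem le_of_hasDerivAt_nonneg_of_nonpos {f f' : ℝ → ℝ} {c : ℝ}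
    (hf : ∀ x, HasDerivAt f (f' x) x) (hleft : ∀ x < c, 0 ≤ f' x)
    (hright : ∀ x, c < x → f' x ≤ 0) (x : ℝ) : f x ≤ f c := by
  have hcont : Continuous f := continuous_iff_continuousAt.2 fun x ↦ (hf x).continuousAt
  rcases le_total x c with hxc | hcx
  · refine monotoneOn_of_hasDerivWithinAt_nonneg (convex_Iic c) hcont.continuousOn
      (fun y _ ↦ (hf y).hasDerivWithinAt) (fun y hy ↦ hleft y ?_) hxc (le_refl c) hxc
    simpa using hy
  · refine antitoneOn_of_hasDerivWithinAt_nonpos (convex_Ici c) hcont.continuousOn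
      (fun y _ ↦ (hf y).hasDerivWithinAt) (fun y hy ↦ hright y ?_) (le_refl c) hcx hcx
    simpa using hy

theorem sign_mul_abs_rpow_sub_one {a : ℝ} (ha : a ≠ 0) (p : ℝ) :
    sign a * |a| ^ (p - 1) = |a| ^ p / a := by
  rw [rpow_sub_one (abs_ne_zero.2 ha)]
  rcases ha.lt_or_gt with h | h
  · rw [sign_of_neg h, abs_of_neg h]
    field_simp
  · rw [sign_of_pos h, abs_of_pos h]
    ring

theorem one_le_sign_mul_abs_rpow_add {q y : ℝ} (hq0 : 0 ≤ q) (hq1 : q ≤ 1) (hy : y < 0) :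
    1 ≤ sign (1 + y) * |1 + y| ^ q + 2 ^ (1 - q) * |y| ^ q := by
  have hC : (1 : ℝ) ≤ 2 ^ (1 - q) := one_le_rpow one_le_two (by linarith)
  rcases lt_or_ge 0 (1 + y) with hpos | hnonpos
  · have hsub : (1 : ℝ) ≤ (1 + y) ^ q + (-y) ^ q := by
      simpa using rpow_add_le_add_rpow hpos.le (neg_nonneg.2 hy.le) hq0 hq1
    rw [sign_of_pos hpos, abs_of_pos hpos, abs_of_neg hy]
    nlinarith [rpow_nonneg (neg_nonneg.2 hy.le) q]
  · have hconc : 1 + |1 + y| ^ q ≤ 2 ^ (1 - q) * |y| ^ q := by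
      have hy_eq : |y| = 1 + |1 + y| := by rw [abs_of_nonpos hnonpos, abs_of_neg hy]; ring
      simpa [hy_eq] using
        rpow_add_rpow_le_two_rpow_mul_rpow_add zero_le_one (abs_nonneg (1 + y)) hq0 hq1
    have hsign : -|1 + y| ^ q ≤ sign (1 + y) * |1 + y| ^ q := by
      rw [neg_eq_neg_one_mul]
      gcongr
      rcases sign_apply_eq (1 + y) with h | h | h <;> rw [h] <;> norm_num
    linarith

theorem abs_one_add_rpow_le {p : ℝ} (hp1 : 1 < p) (hp2 : p ≤ 2) (x : ℝ) :
    |1 + x| ^ p ≤ 1 + p * x + 2 ^ (2 - p) * |x| ^ p := by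
  have hq0 : 0 ≤ p - 1 := by linarith
  have hq1 : p - 1 ≤ 1 := by linarith
  rw [show 2 - p = 1 - (p - 1) by ring]
  set C : ℝ := 2 ^ (1 - (p - 1))
  have hC : 1 ≤ C := one_le_rpow one_le_two (by linarith)
  set F : ℝ → ℝ := fun y ↦ |1 + y| ^ p - (1 + p * y + C * |y| ^ p)
  have hF : ∀ y, HasDerivAt F
      (p * (sign (1 + y) * |1 + y| ^ (p - 1) - 1 - C * (sign y * |y| ^ (p - 1)))) y := by
    intro y
    have h1 := (hasDerivAt_abs_rpow_eq_sign (1 + y) hp1).comp y ((hasDerivAt_id y).const_add 1)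
    have h2 := ((hasDerivAt_id y).const_mul p).const_add 1 |>.add
      ((hasDerivAt_abs_rpow_eq_sign y hp1).const_mul C)
    exact (h1.sub h2).congr_deriv (by ring)
  have hmax := le_of_hasDerivAt_nonneg_of_nonpos hF (c := 0) ?_ ?_ x
  · simp only [F, add_zero, abs_one, one_rpow, mul_zero, abs_zero, zero_rpow (by linarith : p ≠ 0)]
      at hmax
    linarith
  · intro y hy
    refine mul_nonneg (by linarith) ?_
    rw [sign_of_neg hy]
    linarith [one_le_sign_mul_abs_rpow_add hq0 hq1 hy]
  · intro y hy
    have hpos : 0 < 1 + y := by linarith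
    rw [sign_of_pos hy, sign_of_pos hpos, abs_of_pos hy, abs_of_pos hpos]
    have hsub := rpow_add_le_add_rpow zero_le_one hy.le hq0 hq1
    rw [one_rpow] at hsub
    refine mul_nonpos_of_nonneg_of_nonpos (by linarith) ?_
    nlinarith [rpow_nonneg hy.le (p - 1)]

theorem abs_add_rpow_le (a b p : ℝ) (hp1 : 1 < p) (hp2 : p ≤ 2) :
    |a + b| ^ p ≤ |a| ^ p + p * Real.sign a * |a| ^ (p - 1) * b
      + (2 : ℝ) ^ (2 - p) * |b| ^ p := by
  rcases eq_or_ne a 0 with rfl | ha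
  · have hC : (1 : ℝ) ≤ 2 ^ (2 - p) := one_le_rpow one_le_two (by linarith)
    simpa [zero_rpow (by linarith : p ≠ 0)] using
      le_mul_of_one_le_left (rpow_nonneg (abs_nonneg b) p) hC
  have hscale : ∀ x : ℝ, |a * x| ^ p = |a| ^ p * |x| ^ p := fun x ↦ by
    rw [abs_mul, mul_rpow (abs_nonneg a) (abs_nonneg x)]
  calc |a + b| ^ p = |a| ^ p * |1 + b / a| ^ p := by
        rw [← hscale, mul_add, mul_one, mul_div_cancel₀ _ ha]
    _ ≤ |a| ^ p * (1 + p * (b / a) + 2 ^ (2 - p) * |b / a| ^ p) := by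
        gcongr
        exact abs_one_add_rpow_le hp1 hp2 _
    _ = |a| ^ p + p * sign a * |a| ^ (p - 1) * b + 2 ^ (2 - p) * |b| ^ p := by
        rw [mul_add, mul_add, mul_left_comm _ (2 ^ (2 - p)), ← hscale, mul_div_cancel₀ _ ha,
          mul_assoc p, sign_mul_abs_rpow_sub_one ha]
        ring
end

section
/- Let p ∈ (1,2) and define f(x) = 1 + p·x + 2^{2-p}·x^p − (1+x)^p for x > 0. Then f(x) > 0 for all x > 0. -/
/-! For `1 ≤ p ≤ 2` the function `g y = 1 + p y + y ^ p - (1 + y) ^ p` vanishes at `0` and is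
nondecreasing on `[0, ∞)`, since `g' y = p (1 + y ^ (p - 1) - (1 + y) ^ (p - 1)) ≥ 0` by the
subadditivity of `t ↦ t ^ (p - 1)`. Hence `(1 + x) ^ p ≤ 1 + p x + x ^ p`, and the factor
`2 ^ (2 - p) > 1` in front of `x ^ p > 0` makes the inequality strict. -/

open Set

namespace Real

theorem monotoneOn_one_add_mul_add_rpow_sub_one_add_rpow {p : ℝ} (hp1 : 1 ≤ p) (hp2 : p ≤ 2) :
    MonotoneOn (fun y : ℝ => 1 + p * y + y ^ p - (1 + y) ^ p) (Ici 0) := by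
  have hp0 : 0 < p := by linarith
  refine monotoneOn_of_hasDerivWithinAt_nonneg (convex_Ici 0)
    (f' := fun y => p + p * y ^ (p - 1) - 1 * p * (1 + y) ^ (p - 1)) ?_ ?_ ?_
  · have hrpow : Continuous fun t : ℝ => t ^ p := continuous_rpow_const hp0.le
    exact (continuous_const.add (continuous_const.mul continuous_id) |>.add hrpow |>.sub
      (hrpow.comp (continuous_const.add continuous_id))).continuousOn
  · intro y hy
    rw [interior_Ici, mem_Ioi] at hy
    have hpow : HasDerivAt (fun y : ℝ => (1 + y) ^ p) (1 * p * (1 + y) ^ (p - 1)) y :=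
      ((hasDerivAt_id y).const_add 1).rpow_const (Or.inl (by positivity))
    have hlin : HasDerivAt (fun y : ℝ => 1 + p * y) p y := by
      simpa using ((hasDerivAt_id y).const_mul p).const_add 1
    exact ((hlin.add (hasDerivAt_rpow_const (Or.inl hy.ne'))).sub hpow).hasDerivWithinAt
  · intro y hy
    rw [interior_Ici, mem_Ioi] at hy
    have hsub : (1 + y) ^ (p - 1) ≤ 1 + y ^ (p - 1) := by
      simpa only [one_rpow] using
        rpow_add_le_add_rpow zero_le_one hy.le (by linarith : 0 ≤ p - 1) (by linarith)
    nlinarith [rpow_nonneg hy.le (p - 1)]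

theorem one_add_rpow_le_one_add_mul_add_rpow {p x : ℝ} (hp1 : 1 ≤ p) (hp2 : p ≤ 2)
    (hx : 0 ≤ x) : (1 + x) ^ p ≤ 1 + p * x + x ^ p := by
  have h := monotoneOn_one_add_mul_add_rpow_sub_one_add_rpow hp1 hp2 self_mem_Ici hx hx
  simp only [mul_zero, add_zero, zero_rpow (by linarith : p ≠ 0), one_rpow, sub_self] at h
  linarith

end Real

theorem caseA_pos (p : ℝ) (hp1 : 1 < p) (hp2 : p < 2) (x : ℝ) (hx : 0 < x) :
    0 < 1 + p * x + (2 : ℝ) ^ (2 - p) * x ^ p - (1 + x) ^ p := by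
  have hkey := Real.one_add_rpow_le_one_add_mul_add_rpow hp1.le hp2.le hx.le
  have htwo : 1 < (2 : ℝ) ^ (2 - p) := Real.one_lt_rpow (by norm_num) (by linarith)
  have hxp : 0 < x ^ p := Real.rpow_pos_of_pos hx p
  nlinarith
end

section
/- Let p ∈ (1,2) and define h(z) = 2^{2-p}·(1+z)^p − p·(1+z) + 1 − z^p for z ≥ 0. Then h(z) ≥ 0 for all z ≥ 0. -/
/-!
At `z = 0` the expression is `2^(2-p) - p + 1 ≥ 0`. Its derivative in `z` is
`p * (2^(2-p) (1+z)^(p-1) - 1 - z^(p-1))`, which is nonnegative because the concavity of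
`t ↦ t^(p-1)` at the points `1` and `z` gives `1 + z^(p-1) ≤ 2^(2-p) (1+z)^(p-1)`.
-/

open Real Set

lemma Real.rpow_add_rpow_le_two_rpow_mul_rpow_add {q x y : ℝ} (hq₀ : 0 ≤ q) (hq₁ : q ≤ 1)
    (hx : 0 ≤ x) (hy : 0 ≤ y) : x ^ q + y ^ q ≤ 2 ^ (1 - q) * (x + y) ^ q := by
  have hmid := (concaveOn_rpow hq₀ hq₁).2 (mem_Ici.mpr hx) (mem_Ici.mpr hy)
    (by norm_num : (0 : ℝ) ≤ 1 / 2) (by norm_num : (0 : ℝ) ≤ 1 / 2) (by norm_num)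
  have hhalf : (1 / 2 : ℝ) • x + (1 / 2 : ℝ) • y = (x + y) / 2 := by
    simp only [smul_eq_mul]; ring
  rw [hhalf] at hmid
  simp only [smul_eq_mul] at hmid
  rw [div_rpow (add_nonneg hx hy) zero_le_two] at hmid
  have h2q : (0 : ℝ) < 2 ^ q := rpow_pos_of_pos two_pos q
  calc x ^ q + y ^ q ≤ 2 * ((x + y) ^ q / 2 ^ q) := by linarith
    _ = 2 ^ (1 - q) * (x + y) ^ q := by
      rw [rpow_sub two_pos, rpow_one]; field_simp

lemma hasDerivAt_caseC (p : ℝ) (hp : 1 ≤ p) (z : ℝ) :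
    HasDerivAt (fun z : ℝ ↦ (2 : ℝ) ^ (2 - p) * (1 + z) ^ p - p * (1 + z) + 1 - z ^ p)
      (p * ((2 : ℝ) ^ (2 - p) * (1 + z) ^ (p - 1) - 1 - z ^ (p - 1))) z := by
  have hshift : HasDerivAt (fun z : ℝ ↦ 1 + z) 1 z := (hasDerivAt_id z).const_add 1
  have h := ((((hshift.rpow_const (Or.inr hp)).const_mul ((2 : ℝ) ^ (2 - p))).sub
    (hshift.const_mul p)).add_const 1).sub (hasDerivAt_rpow_const (Or.inr hp))
  exact h.congr_deriv (by ring)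

lemma monotoneOn_caseC (p : ℝ) (hp₁ : 1 ≤ p) (hp₂ : p ≤ 2) :
    MonotoneOn (fun z : ℝ ↦ (2 : ℝ) ^ (2 - p) * (1 + z) ^ p - p * (1 + z) + 1 - z ^ p)
      (Ici 0) := by
  refine monotoneOn_of_hasDerivWithinAt_nonneg (convex_Ici 0)
    (fun z _ ↦ (hasDerivAt_caseC p hp₁ z).continuousAt.continuousWithinAt)
    (fun z _ ↦ (hasDerivAt_caseC p hp₁ z).hasDerivWithinAt) fun z hz ↦ ?_
  rw [interior_Ici] at hz
  have hconc : (1 : ℝ) ^ (p - 1) + z ^ (p - 1) ≤ 2 ^ (1 - (p - 1)) * (1 + z) ^ (p - 1) :=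
    rpow_add_rpow_le_two_rpow_mul_rpow_add (by linarith) (by linarith) zero_le_one
      (le_of_lt hz)
  rw [one_rpow, show 1 - (p - 1) = 2 - p by ring] at hconc
  exact mul_nonneg (by linarith) (by linarith)

theorem caseC_nonneg (p : ℝ) (hp1 : 1 < p) (hp2 : p < 2) (z : ℝ) (hz : 0 ≤ z) :
    0 ≤ (2 : ℝ) ^ (2 - p) * (1 + z) ^ p - p * (1 + z) + 1 - z ^ p := by
  have hzero : 0 ≤ (2 : ℝ) ^ (2 - p) * (1 + 0) ^ p - p * (1 + 0) + 1 - (0 : ℝ) ^ p := by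
    have hc : (1 : ℝ) ≤ 2 ^ (2 - p) := one_le_rpow one_le_two (by linarith)
    rw [add_zero, one_rpow, zero_rpow (by linarith)]
    linarith
  exact hzero.trans (monotoneOn_caseC p hp1.le hp2.le self_mem_Ici hz hz)
end

section
/- (Per-iteration descent with normalized preconditioned step.) Let f : R^d → R be L-smooth, let x ∈ R^d, let m ∈ R^d with D m ≠ 0 where D is symmetric positive definite with condition number at most κ, let ε = m − ∇f(x), and set x⁺ = x − η·D m/‖D m‖ for η > 0. Then f(x⁺) ≤ f(x) − η·‖∇f(x)‖/√κ + 2η·‖ε‖ + η²L/2. -/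
open Matrix

open scoped RealInnerProductSpace

/-! With `mD ≤ D ≤ MD`, the direction `w = D m` stays within angle `arccos (1/√κ)` of `m`:
`mD ‖m‖² ≤ ⟪m, D m⟫` and `‖D m‖² ≤ MD ⟪m, D m⟫` (conjugate `MD - D ≥ 0` by `√D`), so
`‖D m‖ ‖m‖ ≤ √κ ⟪m, D m⟫`. Writing `∇f x = m - ε`, the gradient's component along `w` is then at
least `‖∇f x‖ / √κ - 2 ‖ε‖`, and the descent lemma `f (x + v) ≤ f x + ⟪∇f x, v⟫ + L ‖v‖² / 2`
for a step of length `η` gives the bound. -/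

section InnerProduct

variable {E : Type*} [NormedAddCommGroup E] [InnerProductSpace ℝ E]

theorem norm_mul_norm_le_sqrt_mul_inner {v w : E} {m M κ : ℝ} (hm : 0 ≤ m) (hκ0 : 0 ≤ κ)
    (hκ : M ≤ κ * m) (hlow : m * ‖v‖ ^ 2 ≤ ⟪v, w⟫) (hup : ‖w‖ ^ 2 ≤ M * ⟪v, w⟫) :
    ‖w‖ * ‖v‖ ≤ √κ * ⟪v, w⟫ := by
  have hq : 0 ≤ ⟪v, w⟫ := (by positivity : 0 ≤ m * ‖v‖ ^ 2).trans hlow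
  have hsq : (‖w‖ * ‖v‖) ^ 2 ≤ κ * ⟪v, w⟫ ^ 2 := by
    calc (‖w‖ * ‖v‖) ^ 2 = ‖w‖ ^ 2 * ‖v‖ ^ 2 := by ring
      _ ≤ (κ * m) * ⟪v, w⟫ * ‖v‖ ^ 2 := by gcongr; exact hup.trans (by gcongr)
      _ = κ * ⟪v, w⟫ * (m * ‖v‖ ^ 2) := by ring
      _ ≤ κ * ⟪v, w⟫ * ⟪v, w⟫ := by gcongr
      _ = κ * ⟪v, w⟫ ^ 2 := by ring
  calc ‖w‖ * ‖v‖ ≤ √(κ * ⟪v, w⟫ ^ 2) := Real.le_sqrt_of_sq_le hsq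
    _ = √κ * ⟪v, w⟫ := by rw [Real.sqrt_mul' _ (sq_nonneg _), Real.sqrt_sq hq]

theorem div_sub_le_inner_sub_div_norm {m ε w : E} (hw : w ≠ 0) {s : ℝ} (hs : 1 ≤ s)
    (hcone : ‖w‖ * ‖m‖ ≤ s * ⟪m, w⟫) :
    ‖m - ε‖ / s - 2 * ‖ε‖ ≤ ⟪m - ε, w⟫ / ‖w‖ := by
  rw [le_div_iff₀ (norm_pos_iff.mpr hw), inner_sub_left]
  have hs0 : 0 < s := zero_lt_one.trans_le hs
  have hcone' : ‖m‖ / s * ‖w‖ ≤ ⟪m, w⟫ := by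
    rw [div_mul_eq_mul_div, div_le_iff₀ hs0]; linarith
  have hεs : ‖ε‖ / s ≤ ‖ε‖ := div_le_self (norm_nonneg ε) hs
  calc (‖m - ε‖ / s - 2 * ‖ε‖) * ‖w‖
      ≤ ((‖m‖ + ‖ε‖) / s - 2 * ‖ε‖) * ‖w‖ := by gcongr; exact norm_sub_le m ε
    _ = ‖m‖ / s * ‖w‖ - (2 * ‖ε‖ - ‖ε‖ / s) * ‖w‖ := by ring
    _ ≤ ⟪m, w⟫ - ‖ε‖ * ‖w‖ := by gcongr; linarith
    _ ≤ ⟪m, w⟫ - ⟪ε, w⟫ := by gcongr; exact real_inner_le_norm ε w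

end InnerProduct

section Smooth

variable {E : Type*} [NormedAddCommGroup E] [InnerProductSpace ℝ E] [CompleteSpace E]
  {f : E → ℝ} {L : ℝ}

theorem DifferentiableAt.hasDerivAt_comp_add_smul {x v : E} {t : ℝ}
    (hf : DifferentiableAt ℝ f (x + t • v)) :
    HasDerivAt (fun s : ℝ => f (x + s • v)) ⟪gradient f (x + t • v), v⟫ t := by
  have hline : HasDerivAt (fun s : ℝ => x + s • v) v t := by
    simpa using ((hasDerivAt_id t).smul_const v).const_add x
  have h := (hasGradientAt_iff_hasFDerivAt.mp hf.hasGradientAt).comp_hasDerivAt t hline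
  rw [InnerProductSpace.toDual_apply_apply] at h
  exact h

theorem inner_gradient_add_smul_le
    (hsmooth : ∀ x y, ‖gradient f x - gradient f y‖ ≤ L * ‖x - y‖) (x v : E) {t : ℝ}
    (ht : 0 ≤ t) :
    ⟪gradient f (x + t • v), v⟫ ≤ ⟪gradient f x, v⟫ + L * t * ‖v‖ ^ 2 := by
  have hlip : ‖gradient f (x + t • v) - gradient f x‖ ≤ L * t * ‖v‖ := by
    simpa [norm_smul, abs_of_nonneg ht, mul_assoc] using hsmooth (x + t • v) x
  have hcs := real_inner_le_norm (gradient f (x + t • v) - gradient f x) v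
  rw [inner_sub_left] at hcs
  nlinarith [norm_nonneg v]

theorem apply_add_le_of_lipschitz_gradient (hf : Differentiable ℝ f)
    (hsmooth : ∀ x y, ‖gradient f x - gradient f y‖ ≤ L * ‖x - y‖) (x v : E) :
    f (x + v) ≤ f x + ⟪gradient f x, v⟫ + L / 2 * ‖v‖ ^ 2 := by
  have hquad (t : ℝ) :
      HasDerivAt (fun s : ℝ => f x + s * ⟪gradient f x, v⟫ + L / 2 * ‖v‖ ^ 2 * s ^ 2)
        (⟪gradient f x, v⟫ + L * t * ‖v‖ ^ 2) t := by
    refine ((((hasDerivAt_id t).mul_const _).const_add (f x)).add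
      ((hasDerivAt_pow 2 t).const_mul (L / 2 * ‖v‖ ^ 2))).congr_deriv ?_
    push_cast
    ring
  have hbound := image_le_of_deriv_right_le_deriv_boundary (a := 0) (b := 1)
    (f := fun s : ℝ => f (x + s • v)) (by have := hf.continuous; fun_prop)
    (fun t _ => (hf _).hasDerivAt_comp_add_smul.hasDerivWithinAt) (by simp)
    (by fun_prop) (fun t _ => (hquad t).hasDerivWithinAt)
    (fun t ht => inner_gradient_add_smul_le hsmooth x v ht.1)
  simpa using hbound (Set.right_mem_Icc.mpr zero_le_one)

theorem apply_sub_smul_div_norm_le (hf : Differentiable ℝ f)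
    (hsmooth : ∀ x y, ‖gradient f x - gradient f y‖ ≤ L * ‖x - y‖) (x : E) {w : E}
    (hw : w ≠ 0) {η : ℝ} (hη : 0 ≤ η) :
    f (x - (η / ‖w‖) • w) ≤ f x - η / ‖w‖ * ⟪gradient f x, w⟫ + L / 2 * η ^ 2 := by
  have hstep : ‖(η / ‖w‖) • w‖ = η := by
    rw [norm_smul, Real.norm_of_nonneg (by positivity), div_mul_cancel₀ _ (norm_ne_zero_iff.mpr hw)]
  have := apply_add_le_of_lipschitz_gradient hf hsmooth x (-((η / ‖w‖) • w))
  rwa [← sub_eq_add_neg, norm_neg, hstep, inner_neg_right, real_inner_smul_right,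
    ← sub_eq_add_neg] at this

end Smooth

namespace Matrix

variable {n : Type*} [Fintype n] [DecidableEq n]

theorem PosSemidef.inner_toEuclideanLin_nonneg {A : Matrix n n ℝ} (hA : A.PosSemidef)
    (v : EuclideanSpace ℝ n) : 0 ≤ ⟪v, toEuclideanLin A v⟫ :=
  (isPositive_toEuclideanLin_iff.mpr hA).inner_nonneg_right v

open scoped MatrixOrder in
theorem PosSemidef.smul_sub_mul_self {D : Matrix n n ℝ} {c : ℝ} (hD : D.PosSemidef)
    (h : (c • 1 - D).PosSemidef) : (c • D - D * D).PosSemidef := by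
  set S := CFC.sqrt D
  have hS : S * S = D := CFC.sqrt_mul_sqrt_self D hD.nonneg
  have hSherm : Sᴴ = S := (CFC.sqrt_nonneg D).posSemidef.isHermitian
  have hconj : S * (c • 1 - D) * S = c • D - D * D := by
    rw [← hS]
    noncomm_ring
  simpa only [hSherm, hconj] using h.mul_mul_conjTranspose_same S

theorem mul_norm_sq_le_inner_toEuclideanLin {D : Matrix n n ℝ} {c : ℝ}
    (h : (D - c • 1).PosSemidef) (v : EuclideanSpace ℝ n) :
    c * ‖v‖ ^ 2 ≤ ⟪v, toEuclideanLin D v⟫ := by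
  have := h.inner_toEuclideanLin_nonneg v
  simp only [map_sub, map_smul, toLpLin_one, LinearMap.sub_apply, LinearMap.smul_apply,
    LinearMap.id_apply, inner_sub_right, real_inner_smul_right, real_inner_self_eq_norm_sq] at this
  linarith

theorem norm_toEuclideanLin_sq_le {D : Matrix n n ℝ} {c : ℝ} (hD : D.PosSemidef)
    (h : (c • 1 - D).PosSemidef) (v : EuclideanSpace ℝ n) :
    ‖toEuclideanLin D v‖ ^ 2 ≤ c * ⟪v, toEuclideanLin D v⟫ := by
  have := (hD.smul_sub_mul_self h).inner_toEuclideanLin_nonneg v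
  simp only [map_sub, map_smul, toLpLin_mul_same, LinearMap.sub_apply, LinearMap.smul_apply,
    LinearMap.comp_apply, inner_sub_right, real_inner_smul_right,
    ← (isSymmetric_toEuclideanLin_iff.mpr hD.isHermitian) v, real_inner_self_eq_norm_sq] at this
  rw [real_inner_comm] at this
  linarith

end Matrix

theorem normalized_preconditioned_descent_general
    (d : ℕ) (f : EuclideanSpace ℝ (Fin d) → ℝ) (L : ℝ)
    (hdiff : Differentiable ℝ f)
    (hsmooth : ∀ x y, ‖gradient f x - gradient f y‖ ≤ L * ‖x - y‖)
    (D : Matrix (Fin d) (Fin d) ℝ) (hD : D.PosDef)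
    (mD MD κ : ℝ) (hmD : 0 < mD) (hmM : mD ≤ MD) (hκ : MD ≤ κ * mD)
    (hlow : (D - mD • (1 : Matrix (Fin d) (Fin d) ℝ)).PosSemidef)
    (hup : ((MD • (1 : Matrix (Fin d) (Fin d) ℝ)) - D).PosSemidef)
    (x mv : EuclideanSpace ℝ (Fin d))
    (hDm : Matrix.toEuclideanLin D mv ≠ 0)
    (η : ℝ) (hη : 0 < η)
    (ε : EuclideanSpace ℝ (Fin d)) (hε : ε = mv - gradient f x)
    (x' : EuclideanSpace ℝ (Fin d))
    (hx' : x' = x - (η / ‖Matrix.toEuclideanLin D mv‖) • Matrix.toEuclideanLin D mv) :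
    f x' ≤ f x - η * ‖gradient f x‖ / Real.sqrt κ + 2 * η * ‖ε‖ + η ^ 2 * L / 2 := by
  subst hε hx'
  set w := toEuclideanLin D mv
  have hκ1 : 1 ≤ κ := le_of_mul_le_mul_right (by linarith : 1 * mD ≤ κ * mD) hmD
  have hcone : ‖w‖ * ‖mv‖ ≤ √κ * ⟪mv, w⟫ :=
    norm_mul_norm_le_sqrt_mul_inner hmD.le (by linarith) hκ
      (mul_norm_sq_le_inner_toEuclideanLin hlow mv)
      (norm_toEuclideanLin_sq_le hD.posSemidef hup mv)
  have hangle := div_sub_le_inner_sub_div_norm (ε := mv - gradient f x) hDm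
    (Real.one_le_sqrt.mpr hκ1) hcone
  rw [sub_sub_cancel] at hangle
  calc f (x - (η / ‖w‖) • w)
      ≤ f x - η / ‖w‖ * ⟪gradient f x, w⟫ + L / 2 * η ^ 2 :=
        apply_sub_smul_div_norm_le hdiff hsmooth x hDm hη.le
    _ = f x - η * (⟪gradient f x, w⟫ / ‖w‖) + L / 2 * η ^ 2 := by ring
    _ ≤ f x - η * (‖gradient f x‖ / √κ - 2 * ‖mv - gradient f x‖) + L / 2 * η ^ 2 := by gcongr
    _ = _ := by ring

/-- Per-iteration descent for a normalized stochastically preconditioned step. -/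
theorem normalized_preconditioned_descent
    (d : ℕ) (f : EuclideanSpace ℝ (Fin d) → ℝ) (L : ℝ) (hL : 0 < L)
    (hdiff : Differentiable ℝ f)
    (hsmooth : ∀ x y, ‖gradient f x - gradient f y‖ ≤ L * ‖x - y‖)
    (D : Matrix (Fin d) (Fin d) ℝ) (hD : D.PosDef)
    (mD MD κ : ℝ) (hmD : 0 < mD) (hmM : mD ≤ MD) (hκ : MD ≤ κ * mD)
    (hlow : (D - mD • (1 : Matrix (Fin d) (Fin d) ℝ)).PosSemidef)
    (hup : ((MD • (1 : Matrix (Fin d) (Fin d) ℝ)) - D).PosSemidef)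
    (x mv : EuclideanSpace ℝ (Fin d))
    (hDm : Matrix.toEuclideanLin D mv ≠ 0)
    (η : ℝ) (hη : 0 < η)
    (ε : EuclideanSpace ℝ (Fin d)) (hε : ε = mv - gradient f x)
    (x' : EuclideanSpace ℝ (Fin d))
    (hx' : x' = x - (η / ‖Matrix.toEuclideanLin D mv‖) • Matrix.toEuclideanLin D mv) :
    f x' ≤ f x - η * ‖gradient f x‖ / Real.sqrt κ + 2 * η * ‖ε‖ + η ^ 2 * L / 2 :=
  normalized_preconditioned_descent_general d f L hdiff hsmooth D hD mD MD κ hmD hmM hκ hlow hup x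
    mv hDm η hη ε hε x' hx'
end

section
/- Let X be an R^d-valued random variable with E[X] = g, E[‖X−g‖^p] ≤ σ^p for p ∈ (1,2], σ ≥ 0, and let D be a random symmetric positive definite matrix (possibly dependent on X) with m·I ⪯ D ⪯ M·I for deterministic 0 < m ≤ M. Suppose ‖g‖ < τ/(2M) and define X̂ = min{1, τ/‖D X‖}·X. Then E[‖X̂ − E[X̂]‖²] ≤ [9M^p/m² + (3/(2m))^{2−p}]·τ^{2−p}·σ^p. -/
/-!
Clipping keeps `‖D X̂‖ ≤ τ`, so `‖X̂‖ ≤ τ / m`; together with `‖g‖ ≤ τ / (2m)` this bounds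
`‖X̂ - g‖` by `K = 3τ / (2m)`, and also `‖X - g‖` when no clipping occurs (then `X̂ = X`), giving
`‖X̂ - g‖² ≤ K^(2-p) ‖X - g‖^p`. When clipping occurs, `‖D (X - g)‖ > τ / 2` forces
`‖X - g‖ > τ / (2M)`, so `‖X̂ - g‖² ≤ K² ≤ K² (2M ‖X - g‖ / τ)^p`, a pointwise Markov inequality.
Integrating against `E ‖X - g‖^p ≤ σ^p`, and noting that the variance is the least second moment
about a point, gives the bound.
-/

open MeasureTheory Matrix
open scoped ENNReal NNReal RealInnerProductSpace

namespace ContinuousLinearMap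
variable {E : Type*} [NormedAddCommGroup E] [InnerProductSpace ℝ E]

theorem inner_apply_self_le_of_le {S T : E →L[ℝ] E} (hST : S ≤ T) (x : E) :
    ⟪S x, x⟫ ≤ ⟪T x, x⟫ := by
  have := ((le_def S T).mp hST).inner_nonneg_left x
  rwa [_root_.sub_apply, inner_sub_left, sub_nonneg] at this

theorem inner_smul_one_apply_self (c : ℝ) (x : E) :
    ⟪(c • 1 : E →L[ℝ] E) x, x⟫ = c * ‖x‖ ^ 2 := by
  rw [_root_.smul_apply, one_apply_eq_self, real_inner_smul_left, real_inner_self_eq_norm_sq]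

theorem mul_norm_le_norm_apply_of_smul_one_le {T : E →L[ℝ] E} {m : ℝ} (hT : m • 1 ≤ T)
    (x : E) : m * ‖x‖ ≤ ‖T x‖ := by
  rcases (norm_nonneg x).eq_or_lt with hx | hx
  · simp [← hx]
  · refine le_of_mul_le_mul_right ?_ hx
    calc m * ‖x‖ * ‖x‖ = ⟪(m • 1 : E →L[ℝ] E) x, x⟫ := by
          rw [inner_smul_one_apply_self]; ring
      _ ≤ ⟪T x, x⟫ := inner_apply_self_le_of_le hT x
      _ ≤ ‖T x‖ * ‖x‖ := real_inner_le_norm _ _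

theorem norm_le_of_nonneg_of_le_smul_one {T : E →L[ℝ] E} {M : ℝ} (hM : 0 ≤ M) (h0 : 0 ≤ T)
    (hT : T ≤ M • 1) : ‖T‖ ≤ M := by
  have hpos := (nonneg_iff_isPositive T).mp h0
  rw [norm_eq_iSup_rayleighQuotient _ hpos.isSymmetric]
  refine ciSup_le fun x ↦ ?_
  have hle := inner_apply_self_le_of_le hT x
  rw [inner_smul_one_apply_self] at hle
  rw [rayleighQuotient, reApplyInnerSelf_apply, RCLike.re_to_real,
    abs_of_nonneg (div_nonneg (hpos.inner_nonneg_left x) (sq_nonneg _))]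
  exact div_le_of_le_mul₀ (sq_nonneg _) hM hle

end ContinuousLinearMap

namespace Matrix
variable {n : Type*} [Fintype n] [DecidableEq n]

theorem toEuclideanCLM_le_toEuclideanCLM_iff {A B : Matrix n n ℝ} :
    toEuclideanCLM (𝕜 := ℝ) A ≤ toEuclideanCLM (𝕜 := ℝ) B ↔ (B - A).PosSemidef := by
  rw [ContinuousLinearMap.le_def, ← map_sub, ← ContinuousLinearMap.isPositive_toLinearMap_iff,
    coe_toEuclideanCLM_eq_toEuclideanLin, isPositive_toEuclideanLin_iff]

theorem toEuclideanCLM_smul_one (c : ℝ) :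
    toEuclideanCLM (𝕜 := ℝ) (c • 1 : Matrix n n ℝ) = c • 1 := by
  rw [map_smul, map_one]

theorem mul_norm_le_norm_toEuclideanLin {A : Matrix n n ℝ} {m : ℝ}
    (hA : (A - m • 1).PosSemidef) (x : EuclideanSpace ℝ n) : m * ‖x‖ ≤ ‖toEuclideanLin A x‖ := by
  have hle := toEuclideanCLM_le_toEuclideanCLM_iff.mpr hA
  rw [toEuclideanCLM_smul_one] at hle
  exact ContinuousLinearMap.mul_norm_le_norm_apply_of_smul_one_le hle x

theorem norm_toEuclideanLin_le {A : Matrix n n ℝ} {M : ℝ} (hM : 0 ≤ M) (hA : A.PosSemidef)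
    (hAM : (M • 1 - A).PosSemidef) (x : EuclideanSpace ℝ n) :
    ‖toEuclideanLin A x‖ ≤ M * ‖x‖ := by
  have h0 : 0 ≤ toEuclideanCLM (𝕜 := ℝ) A :=
    (ContinuousLinearMap.nonneg_iff_isPositive _).mpr (isPositive_toEuclideanLin_iff.mpr hA)
  have hle := toEuclideanCLM_le_toEuclideanCLM_iff.mpr hAM
  rw [toEuclideanCLM_smul_one] at hle
  calc ‖toEuclideanLin A x‖ = ‖toEuclideanCLM (𝕜 := ℝ) A x‖ := rfl
    _ ≤ ‖toEuclideanCLM (𝕜 := ℝ) A‖ * ‖x‖ := ContinuousLinearMap.le_opNorm _ _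
    _ ≤ M * ‖x‖ := by
      gcongr
      exact ContinuousLinearMap.norm_le_of_nonneg_of_le_smul_one hM h0 hle

end Matrix

theorem Real.rpow_sub_mul_rpow_eq_sq {r : ℝ} (hr : 0 ≤ r) (p : ℝ) :
    r ^ (2 - p) * r ^ p = r ^ 2 := by
  rw [← Real.rpow_add' hr (by norm_num), sub_add_cancel, Real.rpow_two]

theorem Real.sq_le_rpow_sub_mul_rpow {r K p : ℝ} (hr : 0 ≤ r) (hrK : r ≤ K) (hp : p ≤ 2) :
    r ^ 2 ≤ K ^ (2 - p) * r ^ p := by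
  rw [← Real.rpow_sub_mul_rpow_eq_sq hr p]
  gcongr

theorem sq_le_mul_rpow_of_le_of_div_lt {s r τ m M p : ℝ} (hp0 : 0 ≤ p) (hp2 : p ≤ 2)
    (hτ : 0 < τ) (hm : 0 < m) (hM : 0 < M) (hs0 : 0 ≤ s) (hs : s ≤ 3 * τ / (2 * m))
    (hr : τ / (2 * M) < r) :
    s ^ 2 ≤ 9 * M ^ p / m ^ 2 * τ ^ (2 - p) * r ^ p := by
  have hr0 : 0 ≤ r := (by positivity : 0 ≤ τ / (2 * M)).trans hr.le
  have hone : 1 ≤ (2 * M * r / τ) ^ p := by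
    refine Real.one_le_rpow ((one_le_div hτ).mpr ?_) hp0
    linarith [(div_lt_iff₀ (by positivity)).mp hr]
  have htwo : (2 : ℝ) ^ p ≤ 2 ^ (2 : ℝ) := Real.rpow_le_rpow_of_exponent_le one_le_two hp2
  calc s ^ 2 ≤ (3 * τ / (2 * m)) ^ 2 := by gcongr
    _ ≤ (3 * τ / (2 * m)) ^ 2 * (2 * M * r / τ) ^ p :=
        le_mul_of_one_le_right (by positivity) hone
    _ = 9 / (4 * m ^ 2) * τ ^ (2 - p) * (τ ^ p * (2 * M * r / τ) ^ p) := by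
        rw [← mul_assoc, mul_assoc _ (τ ^ (2 - p)), Real.rpow_sub_mul_rpow_eq_sq hτ.le]; ring
    _ = 9 / (4 * m ^ 2) * 2 ^ p * M ^ p * τ ^ (2 - p) * r ^ p := by
        rw [← Real.mul_rpow hτ.le (by positivity), mul_div_cancel₀ _ hτ.ne',
          Real.mul_rpow (by positivity) hr0, Real.mul_rpow zero_le_two hM.le]
        ring
    _ ≤ 9 / (4 * m ^ 2) * 2 ^ (2 : ℝ) * M ^ p * τ ^ (2 - p) * r ^ p := by gcongr
    _ = 9 * M ^ p / m ^ 2 * τ ^ (2 - p) * r ^ p := by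
        rw [Real.rpow_two]; field_simp; ring



section Clipping
variable {E : Type*} [NormedAddCommGroup E] [NormedSpace ℝ E]

/-- When `A x = 0` the factor is `min 1 (τ / 0) = 0`, not `1`: for non-injective `A` this is not
the identity on `ker A`. -/
noncomputable def precondClip (A : E →ₗ[ℝ] E) (τ : ℝ) (x : E) : E := min 1 (τ / ‖A x‖) • x

variable {A : E →ₗ[ℝ] E} {τ m M : ℝ}

theorem norm_apply_precondClip_le (hτ : 0 ≤ τ) (x : E) : ‖A (precondClip A τ x)‖ ≤ τ := by
  have hc : 0 ≤ min 1 (τ / ‖A x‖) := le_min zero_le_one (by positivity)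
  rw [precondClip, map_smul, norm_smul, Real.norm_of_nonneg hc]
  rcases (norm_nonneg (A x)).eq_or_lt with hAx | hAx
  · simp [← hAx, hτ]
  calc min 1 (τ / ‖A x‖) * ‖A x‖ ≤ τ / ‖A x‖ * ‖A x‖ := by gcongr; exact min_le_right _ _
    _ = τ := div_mul_cancel₀ _ hAx.ne'

theorem norm_precondClip_le (hm : 0 < m) (hA : ∀ x, m * ‖x‖ ≤ ‖A x‖) (hτ : 0 ≤ τ) (x : E) :
    ‖precondClip A τ x‖ ≤ τ / m := by
  rw [le_div_iff₀' hm]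
  exact (hA _).trans (norm_apply_precondClip_le hτ x)

theorem precondClip_eq_self (hm : 0 < m) (hA : ∀ x, m * ‖x‖ ≤ ‖A x‖) {x : E}
    (hx : ‖A x‖ ≤ τ) : precondClip A τ x = x := by
  rcases eq_or_ne x 0 with rfl | hx0
  · simp [precondClip]
  · have hpos : 0 < ‖A x‖ := (mul_pos hm (norm_pos_iff.mpr hx0)).trans_le (hA x)
    rw [precondClip, min_eq_left ((one_le_div hpos).mpr hx), one_smul]

theorem div_lt_norm_sub_of_lt_norm_apply (hM : 0 < M) (hA : ∀ x, ‖A x‖ ≤ M * ‖x‖) {g x : E}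
    (hg : ‖g‖ < τ / (2 * M)) (hx : τ < ‖A x‖) : τ / (2 * M) < ‖x - g‖ := by
  have hAg : ‖A g‖ < τ / 2 := calc
    ‖A g‖ ≤ M * ‖g‖ := hA g
    _ < M * (τ / (2 * M)) := by gcongr
    _ = τ / 2 := by field_simp
  have hAxg : τ / 2 < M * ‖x - g‖ := calc
    τ / 2 < ‖A x‖ - ‖A g‖ := by linarith
    _ ≤ ‖A x - A g‖ := norm_sub_norm_le _ _
    _ = ‖A (x - g)‖ := by rw [map_sub]
    _ ≤ M * ‖x - g‖ := hA _
  rw [div_lt_iff₀ (by positivity)]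
  linarith

theorem sq_norm_precondClip_sub_le {p : ℝ} (hp0 : 0 ≤ p) (hp2 : p ≤ 2) (hτ : 0 < τ)
    (hm : 0 < m) (hmM : m ≤ M) (hlow : ∀ x, m * ‖x‖ ≤ ‖A x‖) (hup : ∀ x, ‖A x‖ ≤ M * ‖x‖) {g : E}
    (hg : ‖g‖ < τ / (2 * M)) (x : E) :
    ‖precondClip A τ x - g‖ ^ 2
      ≤ (9 * M ^ p / m ^ 2 + (3 / (2 * m)) ^ (2 - p)) * τ ^ (2 - p) * ‖x - g‖ ^ p := by
  have hM : 0 < M := hm.trans_le hmM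
  have hsub : ∀ y : E, ‖y‖ ≤ τ / m → ‖y - g‖ ≤ 3 * τ / (2 * m) := fun y hy ↦ calc
    ‖y - g‖ ≤ ‖y‖ + ‖g‖ := norm_sub_le _ _
    _ ≤ τ / m + τ / (2 * m) := add_le_add hy (hg.le.trans (by gcongr))
    _ = 3 * τ / (2 * m) := by field_simp; ring
  rw [add_mul, add_mul]
  by_cases hx : ‖A x‖ ≤ τ
  · rw [precondClip_eq_self hm hlow hx]
    have hxg := hsub x ((le_div_iff₀' hm).mpr ((hlow x).trans hx))
    refine le_add_of_nonneg_of_le (by positivity) ?_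
    calc ‖x - g‖ ^ 2 ≤ (3 * τ / (2 * m)) ^ (2 - p) * ‖x - g‖ ^ p :=
          Real.sq_le_rpow_sub_mul_rpow (norm_nonneg _) hxg hp2
      _ = (3 / (2 * m)) ^ (2 - p) * τ ^ (2 - p) * ‖x - g‖ ^ p := by
          rw [mul_div_right_comm, Real.mul_rpow (by positivity) hτ.le]
  · refine le_add_of_le_of_nonneg ?_ (by positivity)
    exact sq_le_mul_rpow_of_le_of_div_lt hp0 hp2 hτ hm hM (norm_nonneg _)
      (hsub _ (norm_precondClip_le hm hlow hτ.le x))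
      (div_lt_norm_sub_of_lt_norm_apply hM hup hg (not_le.mp hx))

end Clipping

section Moments
variable {Ω : Type*} [MeasurableSpace Ω] {μ : Measure Ω}

theorem integral_norm_sub_sq_eq_add [IsProbabilityMeasure μ] {E : Type*}
    [NormedAddCommGroup E] [InnerProductSpace ℝ E] [CompleteSpace E] {Y : Ω → E}
    (hY : MemLp Y 2 μ) (c : E) :
    ∫ ω, ‖Y ω - c‖ ^ 2 ∂μ
      = ∫ ω, ‖Y ω - ∫ ω', Y ω' ∂μ‖ ^ 2 ∂μ + ‖∫ ω', Y ω' ∂μ - c‖ ^ 2 := by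
  set a := ∫ ω', Y ω' ∂μ
  have hint : Integrable Y μ := hY.integrable one_le_two
  have hsq : Integrable (fun ω ↦ ‖Y ω - a‖ ^ 2) μ :=
    (hY.sub (memLp_const a)).integrable_norm_pow two_ne_zero
  have hcentered : Integrable (fun ω ↦ Y ω - a) μ := hint.sub (integrable_const a)
  have hcross : Integrable (fun ω ↦ 2 * ⟪a - c, Y ω - a⟫) μ :=
    (hcentered.const_inner _).const_mul 2
  have hcross_zero : ∫ ω, 2 * ⟪a - c, Y ω - a⟫ ∂μ = 0 := by
    rw [integral_const_mul, integral_inner hcentered,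
      integral_sub hint (integrable_const a), integral_const, probReal_univ, one_smul, sub_self,
      inner_zero_right, mul_zero]
  have hexpand : ∀ ω, ‖Y ω - c‖ ^ 2 = ‖Y ω - a‖ ^ 2 + 2 * ⟪a - c, Y ω - a⟫ + ‖a - c‖ ^ 2 :=
    fun ω ↦ by rw [← sub_add_sub_cancel (Y ω) a c, norm_add_sq_real, real_inner_comm]
  simp_rw [hexpand]
  have hsum : Integrable (fun ω ↦ ‖Y ω - a‖ ^ 2 + 2 * ⟪a - c, Y ω - a⟫) μ := hsq.add hcross
  rw [integral_add hsum (integrable_const _), integral_add hsq hcross, hcross_zero,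
    integral_const, probReal_univ, one_smul, add_zero]

theorem integral_norm_sub_integral_sq_le [IsProbabilityMeasure μ] {E : Type*}
    [NormedAddCommGroup E] [InnerProductSpace ℝ E] [CompleteSpace E] {Y : Ω → E}
    (hY : MemLp Y 2 μ) (c : E) :
    ∫ ω, ‖Y ω - ∫ ω', Y ω' ∂μ‖ ^ 2 ∂μ ≤ ∫ ω, ‖Y ω - c‖ ^ 2 ∂μ := by
  rw [integral_norm_sub_sq_eq_add hY c]
  exact le_add_of_nonneg_right (sq_nonneg _)

theorem integral_le_mul_of_le_mul_rpow_norm {F : Type*} [NormedAddCommGroup F] {f : Ω → ℝ}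
    {Z : Ω → F} {p c B : ℝ} (hf : AEStronglyMeasurable f μ) (hf0 : ∀ ω, 0 ≤ f ω) (hp : 0 ≤ p)
    (hc : 0 ≤ c) (hB : 0 ≤ B) (hfZ : ∀ ω, f ω ≤ c * ‖Z ω‖ ^ p)
    (hZ : ∫⁻ ω, (‖Z ω‖₊ : ℝ≥0∞) ^ p ∂μ ≤ ENNReal.ofReal B) :
    ∫ ω, f ω ∂μ ≤ c * B := by
  rw [integral_eq_lintegral_of_nonneg_ae (ae_of_all _ hf0) hf]
  refine ENNReal.toReal_le_of_le_ofReal (by positivity) ?_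
  calc ∫⁻ ω, ENNReal.ofReal (f ω) ∂μ
        ≤ ∫⁻ ω, ENNReal.ofReal c * (‖Z ω‖₊ : ℝ≥0∞) ^ p ∂μ := by
        refine lintegral_mono fun ω ↦ ?_
        rw [← enorm_eq_nnnorm, ← ofReal_norm, ENNReal.ofReal_rpow_of_nonneg (norm_nonneg _) hp,
          ← ENNReal.ofReal_mul hc]
        exact ENNReal.ofReal_le_ofReal (hfZ ω)
    _ = ENNReal.ofReal c * ∫⁻ ω, (‖Z ω‖₊ : ℝ≥0∞) ^ p ∂μ :=
        lintegral_const_mul' _ _ ENNReal.ofReal_ne_top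
    _ ≤ ENNReal.ofReal (c * B) := by
        rw [ENNReal.ofReal_mul hc]
        gcongr

end Moments

theorem precond_clip_variance_bound_general
    {Ω : Type*} [m0 : MeasurableSpace Ω] (μ : Measure Ω) [IsProbabilityMeasure μ]
    (d : ℕ) (p σ τ m M : ℝ) (hp1 : 1 < p) (hp2 : p ≤ 2) (hσ : 0 ≤ σ) (hτ : 0 < τ)
    (hm : 0 < m) (hmM : m ≤ M)
    (X : Ω → EuclideanSpace ℝ (Fin d))
    (g : EuclideanSpace ℝ (Fin d))
    (hmom : ∫⁻ ω, (‖X ω - g‖₊ : ℝ≥0∞) ^ p ∂μ ≤ ENNReal.ofReal (σ ^ p))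
    (D : Ω → Matrix (Fin d) (Fin d) ℝ)
    (hDpos : ∀ ω, (D ω).PosDef)
    (hDlow : ∀ ω, (D ω - m • (1 : Matrix (Fin d) (Fin d) ℝ)).PosSemidef)
    (hDup : ∀ ω, ((M • (1 : Matrix (Fin d) (Fin d) ℝ)) - D ω).PosSemidef)
    (hg : ‖g‖ < τ / (2 * M))
    (Xhat : Ω → EuclideanSpace ℝ (Fin d))
    (hXhat : ∀ ω, Xhat ω = min 1 (τ / ‖Matrix.toEuclideanLin (D ω) (X ω)‖) • X ω)
    (hXhatmeas : AEStronglyMeasurable Xhat μ) :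
    ∫ ω, ‖Xhat ω - ∫ ω', Xhat ω' ∂μ‖ ^ 2 ∂μ
      ≤ (9 * M ^ p / m ^ 2 + (3 / (2 * m)) ^ (2 - p)) * τ ^ (2 - p) * σ ^ p := by
  have hM : 0 < M := hm.trans_le hmM
  have hlow ω := mul_norm_le_norm_toEuclideanLin (hDlow ω)
  have hup ω := norm_toEuclideanLin_le hM.le (hDpos ω).posSemidef (hDup ω)
  have hclip ω : Xhat ω = precondClip (toEuclideanLin (D ω)) τ (X ω) := hXhat ω
  have hXhat_memLp : MemLp Xhat 2 μ :=
    MemLp.of_bound hXhatmeas (τ / m) <| ae_of_all _ fun ω ↦ by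
      rw [hclip]
      exact norm_precondClip_le hm (hlow ω) hτ.le _
  calc ∫ ω, ‖Xhat ω - ∫ ω', Xhat ω' ∂μ‖ ^ 2 ∂μ ≤ ∫ ω, ‖Xhat ω - g‖ ^ 2 ∂μ :=
        integral_norm_sub_integral_sq_le hXhat_memLp g
    _ ≤ _ := by
        refine integral_le_mul_of_le_mul_rpow_norm
          ((hXhatmeas.sub aestronglyMeasurable_const).norm.pow 2) (fun _ ↦ sq_nonneg _)
          (by linarith) (by positivity) (by positivity) (fun ω ↦ ?_) hmom
        rw [hclip]
        exact sq_norm_precondClip_sub_le (by linarith) hp2 hτ hm hmM (hlow ω) (hup ω) hg (X ω)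

/-- Variance bound for preconditioning-then-clipping. -/
theorem precond_clip_variance_bound
    {Ω : Type*} [m0 : MeasurableSpace Ω] (μ : Measure Ω) [IsProbabilityMeasure μ]
    (d : ℕ) (p σ τ m M : ℝ) (hp1 : 1 < p) (hp2 : p ≤ 2) (hσ : 0 ≤ σ) (hτ : 0 < τ)
    (hm : 0 < m) (hmM : m ≤ M)
    (X : Ω → EuclideanSpace ℝ (Fin d))
    (hXmeas : AEStronglyMeasurable X μ) (hXint : Integrable X μ)
    (g : EuclideanSpace ℝ (Fin d)) (hmean : ∫ ω, X ω ∂μ = g)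
    (hmom : ∫⁻ ω, (‖X ω - g‖₊ : ℝ≥0∞) ^ p ∂μ ≤ ENNReal.ofReal (σ ^ p))
    (D : Ω → Matrix (Fin d) (Fin d) ℝ)
    (hDpos : ∀ ω, (D ω).PosDef)
    (hDlow : ∀ ω, (D ω - m • (1 : Matrix (Fin d) (Fin d) ℝ)).PosSemidef)
    (hDup : ∀ ω, ((M • (1 : Matrix (Fin d) (Fin d) ℝ)) - D ω).PosSemidef)
    (hg : ‖g‖ < τ / (2 * M))
    (Xhat : Ω → EuclideanSpace ℝ (Fin d))
    (hXhat : ∀ ω, Xhat ω = min 1 (τ / ‖Matrix.toEuclideanLin (D ω) (X ω)‖) • X ω)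
    (hXhatmeas : AEStronglyMeasurable Xhat μ) :
    ∫ ω, ‖Xhat ω - ∫ ω', Xhat ω' ∂μ‖ ^ 2 ∂μ
      ≤ (9 * M ^ p / m ^ 2 + (3 / (2 * m)) ^ (2 - p)) * τ ^ (2 - p) * σ ^ p :=
  precond_clip_variance_bound_general (m0 := m0) μ d p σ τ m M hp1 hp2 hσ hτ hm hmM X g hmom D hDpos
    hDlow hDup hg Xhat hXhat hXhatmeas
end
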